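/- Let V be a valuation domain with quotient field K and infinite residue field, let I be a fractional ideal of V and α ∈ K. Then α + I is the set of pseudo-limits of some pseudo-stationary sequence in K if and only if I is a principal fractional ideal. -/

import Mathlib

open scoped Pointwise Classical

section Defs

variable {K : Type*} [Field K] {Γ : Type*} [LinearOrderedCommGroupWithZero Γ]
variable {Λ : Type*} [LinearOrder Λ]

/-- `E = {s ν}` is pseudo-convergent: (additively) `v(s_ρ−s_ν) < v(s_σ−s_ρ)` for `ν<ρ<σ`.
In Mathlib's multiplicative convention this reads `v (s σ - s ρ) < v (s ρ - s ν)`. -/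
def IsPseudoConvergent (v : Valuation K Γ) (s : Λ → K) : Prop :=
  ∀ ⦃ν ρ σ : Λ⦄, ν < ρ → ρ < σ → v (s σ - s ρ) < v (s ρ - s ν)

/-- `E = {s ν}` is pseudo-divergent: (additively) `v(s_ρ−s_ν) > v(s_σ−s_ρ)` for `ν<ρ<σ`. -/
def IsPseudoDivergent (v : Valuation K Γ) (s : Λ → K) : Prop :=
  ∀ ⦃ν ρ σ : Λ⦄, ν < ρ → ρ < σ → v (s ρ - s ν) < v (s σ - s ρ)

/-- `E = {s ν}` is pseudo-stationary: the terms are distinct and all pairwise differences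
have the same (nonzero) value. -/
def IsPseudoStationary (v : Valuation K Γ) (s : Λ → K) : Prop :=
  (∀ ⦃ν μ : Λ⦄, ν ≠ μ → s ν ≠ s μ) ∧
    ∀ ⦃ν μ ν' μ' : Λ⦄, ν ≠ μ → ν' ≠ μ' → v (s ν - s μ) = v (s ν' - s μ')

/-- A pseudo-monotone sequence: pseudo-convergent, pseudo-divergent or pseudo-stationary. -/
def IsPseudoMonotone (v : Valuation K Γ) (s : Λ → K) : Prop :=
  IsPseudoConvergent v s ∨ IsPseudoDivergent v s ∨ IsPseudoStationary v s

/-- `α` is a pseudo-limit of the pseudo-convergent sequence `s`: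
`v(α − s_ν) = δ_ν` for all `ν`, where `δ_ν = v(s_ρ − s_ν)` for any `ρ > ν`. -/
def IsPseudoLimitPcv (v : Valuation K Γ) (s : Λ → K) (α : K) : Prop :=
  ∀ ⦃ν ρ : Λ⦄, ν < ρ → v (α - s ν) = v (s ρ - s ν)

/-- `α` is a pseudo-limit of the pseudo-divergent sequence `s`:
`v(α − s_ν) = δ_ν` for all sufficiently large `ν`, where `δ_ν = v(s_ρ − s_ν)` for any `ρ < ν`. -/
def IsPseudoLimitPdv (v : Valuation K Γ) (s : Λ → K) (α : K) : Prop :=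
  ∃ N : Λ, ∀ ⦃ν : Λ⦄, N ≤ ν → ∀ ⦃ρ : Λ⦄, ρ < ν → v (α - s ν) = v (s ρ - s ν)

/-- `α` is a pseudo-limit of the pseudo-stationary sequence `s`:
`v(α − s_ν) = δ` for all sufficiently large `ν`, where `δ` is the breadth. -/
def IsPseudoLimitPst (v : Valuation K Γ) (s : Λ → K) (α : K) : Prop :=
  ∃ N : Λ, ∀ ⦃ν : Λ⦄, N ≤ ν → ∀ ⦃μ μ' : Λ⦄, μ ≠ μ' → v (α - s ν) = v (s μ - s μ')

/-- `α` is a pseudo-limit of a strictly pseudo-monotone sequence `s`. -/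
def IsPseudoLimitSPM (v : Valuation K Γ) (s : Λ → K) (α : K) : Prop :=
  (IsPseudoConvergent v s ∧ IsPseudoLimitPcv v s α) ∨
    (IsPseudoDivergent v s ∧ IsPseudoLimitPdv v s α)

/-- The breadth ideal of a pseudo-convergent sequence:
(additively) `{x : v(x) > δ_ν for all ν}`. -/
def BreadthPcv (v : Valuation K Γ) (s : Λ → K) : Set K :=
  {x : K | ∀ ⦃ν ρ : Λ⦄, ν < ρ → v x < v (s ρ - s ν)}

/-- The breadth ideal of a pseudo-divergent sequence:
(additively) `{x : v(x) > δ_ν for some ν}`. -/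
def BreadthPdv (v : Valuation K Γ) (s : Λ → K) : Set K :=
  {x : K | ∃ ν ρ : Λ, ρ < ν ∧ v x < v (s ρ - s ν)}

/-- The breadth ideal of a pseudo-stationary sequence: (additively) `{x : v(x) ≥ δ}`. -/
def BreadthPst (v : Valuation K Γ) (s : Λ → K) : Set K :=
  {x : K | ∀ ⦃ν μ : Λ⦄, ν ≠ μ → v x ≤ v (s ν - s μ)}

/-- The breadth ideal of a sequence which is definitively either pseudo-convergent or
pseudo-stationary: `{x : v(x) ≤ v(s ρ - s ν)` for all sufficiently large `ν < ρ}`. -/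
def BreadthCvStat (v : Valuation K Γ) (s : Λ → K) : Set K :=
  {x : K | ∃ N : Λ, ∀ ⦃ν ρ : Λ⦄, N ≤ ν → ν < ρ → v x ≤ v (s ρ - s ν)}

/-- The ring `V_E` of rational functions mapping the tail of `E` into the valuation ring,
as a subset of `K(X)`. -/
def VESet (v : Valuation K Γ) (s : Λ → K) : Set (RatFunc K) :=
  {φ : RatFunc K | ∃ N : Λ, ∀ ⦃ν : Λ⦄, N ≤ ν → v (RatFunc.eval (RingHom.id K) (s ν) φ) ≤ 1}

end Defs

section FracIdeals

variable {K : Type*} [Field K]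

/-- `I` is a fractional ideal of the valuation subring `A` of `K`. -/
def IsFractionalSub (A : ValuationSubring K) (I : Submodule A K) : Prop :=
  ∃ a : K, a ∈ A ∧ a ≠ 0 ∧ ∀ x ∈ I, a * x ∈ A

/-- `I` is strictly divisorial: it equals the intersection of all principal fractional
ideals properly containing it. -/
def IsStrictlyDivisorial (A : ValuationSubring K) (I : Submodule A K) : Prop :=
  I = ⨅ c ∈ {c : K | I < Submodule.span A {c}}, Submodule.span A {c}

end FracIdeals

universe u

/-! The pseudo-limits of a pseudo-stationary sequence of breadth `δ` are exactly the elements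
within `δ` of one (equivalently, any) of its terms: such an element is within `δ` of every term,
and it is strictly closer than `δ` to at most one term, since two such terms would be strictly
closer than `δ` to each other. So the pseudo-limit set is a closed ball, that is, a translate of
the principal fractional ideal generated by a difference of two terms. Conversely, the ball
`α + cV` is the pseudo-limit set of `α + c aₙ` for any `aₙ ∈ V` with pairwise distinct residues,
and these exist because the residue field is infinite. -/

theorem Valuation.map_sub_le_iff_of_map_sub_le {R Γ₀ : Type*} [Ring R]
    [LinearOrderedCommMonoidWithZero Γ₀] (v : Valuation R Γ₀) {a b x : R} {r : Γ₀}
    (h : v (b - a) ≤ r) : v (x - a) ≤ r ↔ v (x - b) ≤ r := by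
  constructor
  · intro hx
    simpa using v.map_sub_le hx h
  · intro hx
    simpa using v.map_add_le hx h

namespace IsPseudoStationary

variable {K : Type*} [Field K] {Γ : Type*} [LinearOrderedCommGroupWithZero Γ]
  {Λ : Type*} {v : Valuation K Γ} {s : Λ → K}

theorem map_sub_le (hs : IsPseudoStationary v s) {ν₀ ρ₀ : Λ} (h : ν₀ ≠ ρ₀) (μ μ' : Λ) :
    v (s μ - s μ') ≤ v (s ρ₀ - s ν₀) := by
  rcases eq_or_ne μ μ' with rfl | hμ
  · simp
  · exact (hs.2 hμ h.symm).le

theorem isPseudoLimitPst_iff [LinearOrder Λ] (hs : IsPseudoStationary v s)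
    (hcof : ∀ ν : Λ, ∃ ρ, ν < ρ) {ν₀ ρ₀ : Λ} (h : ν₀ ≠ ρ₀) {β : K} :
    IsPseudoLimitPst v s β ↔ v (β - s ν₀) ≤ v (s ρ₀ - s ν₀) := by
  set δ := v (s ρ₀ - s ν₀)
  have hball (μ : Λ) : v (β - s ν₀) ≤ δ ↔ v (β - s μ) ≤ δ :=
    v.map_sub_le_iff_of_map_sub_le (hs.map_sub_le h μ ν₀)
  constructor
  · rintro ⟨N, hN⟩
    exact (hball N).2 (hN le_rfl h.symm).le
  intro hβ
  have hclose {ν ν₁ : Λ} (hne : ν ≠ ν₁) (hν₁ : v (β - s ν₁) < δ) : δ ≤ v (β - s ν) := by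
    refine not_lt.1 fun hν => (hs.2 hne h.symm).not_lt ?_
    simpa using v.map_sub_lt hν₁ hν
  suffices ∃ N, ∀ ν, N ≤ ν → δ ≤ v (β - s ν) by
    obtain ⟨N, hN⟩ := this
    refine ⟨N, fun ν hν μ μ' hμ => ?_⟩
    rw [hs.2 hμ h.symm]
    exact le_antisymm ((hball ν).1 hβ) (hN ν hν)
  by_cases hex : ∃ ν₁, v (β - s ν₁) < δ
  · obtain ⟨ν₁, hν₁⟩ := hex
    obtain ⟨N, hN⟩ := hcof ν₁
    exact ⟨N, fun ν hν => hclose (hN.trans_le hν).ne' hν₁⟩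
  · simp only [not_exists, not_lt] at hex
    exact ⟨ν₀, fun ν _ => hex ν⟩

end IsPseudoStationary

namespace ValuationSubring

variable {K : Type*} [Field K] (A : ValuationSubring K)

theorem mem_span_singleton_iff_valuation_le {c x : K} (hc : c ≠ 0) :
    x ∈ Submodule.span A {c} ↔ A.valuation x ≤ A.valuation c := by
  rw [Submodule.mem_span_singleton]
  constructor
  · rintro ⟨a, rfl⟩
    simpa [Algebra.smul_def] using mul_le_mul_left (A.valuation_le_one a) (A.valuation c)
  · intro h
    have hdiv : A.valuation (x / c) ≤ 1 := by
      rw [map_div₀]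
      exact div_le_one_of_le₀ h zero_le
    exact ⟨⟨x / c, A.mem_of_valuation_le_one _ hdiv⟩, by simp [Algebra.smul_def, hc]⟩

theorem image_add_span_singleton {c : K} (hc : c ≠ 0) (α : K) :
    (α + ·) '' (Submodule.span A {c} : Set K) = {β | A.valuation (β - α) ≤ A.valuation c} := by
  ext β
  rw [Set.image_add_left, Set.mem_preimage, SetLike.mem_coe,
    mem_span_singleton_iff_valuation_le A hc, neg_add_eq_sub]
  rfl

theorem valuation_sub_eq_one_of_residue_ne {a b : A}
    (h : IsLocalRing.residue A a ≠ IsLocalRing.residue A b) :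
    A.valuation ((a : K) - b) = 1 := by
  refine le_antisymm (A.valuation_le_one (a - b)) (not_lt.1 fun hlt => h ?_)
  rw [← sub_eq_zero, ← map_sub, IsLocalRing.residue_eq_zero_iff, A.valuation_lt_one_iff]
  simpa using hlt

theorem exists_isPseudoStationary [Infinite (IsLocalRing.ResidueField A)] {c : K} (hc : c ≠ 0)
    (α : K) : ∃ s : ULift ℕ → K, IsPseudoStationary A.valuation s ∧
      A.valuation (s ⟨1⟩ - s ⟨0⟩) = A.valuation c ∧ A.valuation (α - s ⟨0⟩) ≤ A.valuation c := by
  let a (n : ℕ) : A :=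
    Function.surjInv IsLocalRing.residue_surjective (Infinite.natEmbedding _ n)
  have ha : Function.Injective (IsLocalRing.residue A ∘ a) := by
    intro n m h
    simpa [a, Function.surjInv_eq] using h
  let s (n : ULift ℕ) : K := α + c * a n.down
  have hs {n m : ULift ℕ} (hnm : n ≠ m) : A.valuation (s n - s m) = A.valuation c := by
    have hres := ha.ne (ULift.down_injective.ne hnm)
    rw [show s n - s m = c * (a n.down - a m.down) by ring, map_mul,
      A.valuation_sub_eq_one_of_residue_ne hres, mul_one]
  refine ⟨s, ⟨fun n m hnm h => ?_, fun n m n' m' h h' => by rw [hs h, hs h']⟩, hs (by simp), ?_⟩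
  · have h0 := hs hnm
    rw [h, sub_self, map_zero, eq_comm, Valuation.zero_iff] at h0
    exact hc h0
  · simpa [s, map_mul] using mul_le_of_le_one_right zero_le (A.valuation_le_one (a 0))

end ValuationSubring

theorem stmt5_general {K : Type u} [Field K] (A : ValuationSubring K)
    [Infinite (IsLocalRing.ResidueField A)] (I : Submodule A K)
    (hI0 : I ≠ ⊥) (α : K) :
    (∃ (Λ : Type u) (_ : LinearOrder Λ) (_ : WellFoundedLT Λ) (_ : Nonempty Λ) (s : Λ → K),
        (∀ ν : Λ, ∃ ρ : Λ, ν < ρ) ∧ IsPseudoStationary A.valuation s ∧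
        {β : K | IsPseudoLimitPst A.valuation s β} = (α + ·) '' (I : Set K)) ↔
      ∃ c : K, I = Submodule.span A {c} := by
  constructor
  · rintro ⟨Λ, _, _, ⟨ν₀⟩, s, hcof, hs, hset⟩
    obtain ⟨ρ₀, hρ₀⟩ := hcof ν₀
    have hc : s ρ₀ - s ν₀ ≠ 0 := sub_ne_zero.2 (hs.1 hρ₀.ne')
    have hα : A.valuation (α - s ν₀) ≤ A.valuation (s ρ₀ - s ν₀) :=
      (hs.isPseudoLimitPst_iff hcof hρ₀.ne).1
        (hset.symm ▸ ⟨0, I.zero_mem, add_zero α⟩ : α ∈ {β | IsPseudoLimitPst A.valuation s β})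
    refine ⟨s ρ₀ - s ν₀, SetLike.coe_injective (Set.image_injective.2 (add_right_injective α) ?_)⟩
    rw [← hset, A.image_add_span_singleton hc]
    ext β
    exact (hs.isPseudoLimitPst_iff hcof hρ₀.ne).trans
      (A.valuation.map_sub_le_iff_of_map_sub_le hα)
  · rintro ⟨c, rfl⟩
    have hc : c ≠ 0 := by
      rintro rfl
      exact hI0 (Submodule.span_singleton_eq_bot.2 rfl)
    obtain ⟨s, hs, hbreadth, hα⟩ := A.exists_isPseudoStationary hc α
    have hcof (n : ULift ℕ) : ∃ m, n < m := ⟨⟨n.down + 1⟩, Nat.lt_succ_self _⟩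
    refine ⟨ULift ℕ, inferInstance, inferInstance, ⟨⟨0⟩⟩, s, hcof, hs, ?_⟩
    rw [A.image_add_span_singleton hc]
    ext β
    refine (hs.isPseudoLimitPst_iff hcof (ν₀ := ⟨0⟩) (ρ₀ := ⟨1⟩) (by simp)).trans ?_
    rw [hbreadth]
    exact A.valuation.map_sub_le_iff_of_map_sub_le hα

/-- Let `V` be a valuation domain with quotient field `K` and infinite
residue field, `I` a (nonzero) fractional ideal of `V` and `α ∈ K`. Then `α + I` is the set
of pseudo-limits of some pseudo-stationary sequence in `K` if and only if `I` is a principal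
fractional ideal. -/
theorem stmt5 {K : Type u} [Field K] (A : ValuationSubring K)
    [Infinite (IsLocalRing.ResidueField A)] (I : Submodule A K)
    (hfrac : IsFractionalSub A I) (hI0 : I ≠ ⊥) (α : K) :
    (∃ (Λ : Type u) (_ : LinearOrder Λ) (_ : WellFoundedLT Λ) (_ : Nonempty Λ) (s : Λ → K),
        (∀ ν : Λ, ∃ ρ : Λ, ν < ρ) ∧ IsPseudoStationary A.valuation s ∧
        {β : K | IsPseudoLimitPst A.valuation s β} = (α + ·) '' (I : Set K)) ↔
      ∃ c : K, I = Submodule.span A {c} :=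
  stmt5_general A I hI0 α
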